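/- arXiv:1711.09429 — 6 statements merged into one kernel-verified Lean document; each statement's English description precedes it below -/
import Mathlib

section
/- Suppose |I_j| ≥ 1 for all 1 ≤ j ≤ M. Then there exists a finite constant C, depending only on N, M, the data y_{ij}, b_i and the τ_i, such that for every σ ∈ (0,∞)^N, ∫_{ℝ^N} ∫_{ℝ^M} p(B,G,σ²) dG dB ≤ C · ∏_{i=1}^N σ_i^{ −|J_i| − 2 − 2α + Σ_{j∈J_i}|I_j|^{-1} } · exp( −β/σ_i² ). In particular, the marginal (unnormalized) posterior density of σ² is dominated by a product of inverse-Gamma kernels with shape parameters α_i = α + (|J_i| − Σ_{j∈J_i}|I_j|^{-1})/2 ≥ α and scale β. -/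
/-!
For fixed `B` the integral over `G` factorizes over the sources `j`. The `j`-th factor is the
integral of a product of `|I_j|` Gaussian kernels in `G_j`; bounding it by the narrowest kernel
alone gives `√(2π) · min_{i ∈ I_j} σ_i ≤ √(2π) · ∏_{i ∈ I_j} σ_i ^ (1/|I_j|)`. Regrouping these
products by instrument yields `∏_i σ_i ^ (∑_{j ∈ J_i} 1/|I_j|)`, and what is left of the
`B`-integral is the Gaussian prior, a constant.
-/

open MeasureTheory Real Finset

theorem integrable_exp_neg_sub_sq_div {σ : ℝ} (hσ : 0 < σ) (m : ℝ) :
    Integrable fun x : ℝ => exp (-((m - x) ^ 2 / (2 * σ ^ 2))) := by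
  have := (integrable_exp_neg_mul_sq (b := (2 * σ ^ 2)⁻¹) (by positivity)).comp_sub_right m
  refine this.congr (ae_of_all _ fun x => ?_)
  show exp _ = exp _
  congr 1
  ring

theorem integral_exp_neg_sub_sq_div {σ : ℝ} (hσ : 0 < σ) (m : ℝ) :
    ∫ x : ℝ, exp (-((m - x) ^ 2 / (2 * σ ^ 2))) = √(2 * π) * σ := by
  have h := (integral_sub_right_eq_self (fun x : ℝ => exp (-(2 * σ ^ 2)⁻¹ * x ^ 2)) m).trans
    (integral_gaussian (2 * σ ^ 2)⁻¹)
  calc ∫ x : ℝ, exp (-((m - x) ^ 2 / (2 * σ ^ 2)))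
      = ∫ x : ℝ, exp (-(2 * σ ^ 2)⁻¹ * (x - m) ^ 2) := by
        congr 1 with x; congr 1; ring
    _ = √(2 * π) * σ := by
        rw [h, div_inv_eq_mul, show π * (2 * σ ^ 2) = 2 * π * σ ^ 2 by ring,
          sqrt_mul (by positivity), sqrt_sq hσ.le]

theorem integral_exp_neg_sum_sq_div_le_of_mem {ι : Type*} {s : Finset ι} {σ : ι → ℝ} {k : ι}
    (hk : k ∈ s) (hσk : 0 < σ k) (c : ι → ℝ) :
    ∫ x : ℝ, exp (-∑ i ∈ s, (c i - x) ^ 2 / (2 * σ i ^ 2)) ≤ √(2 * π) * σ k := by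
  rw [← integral_exp_neg_sub_sq_div hσk (c k)]
  refine integral_mono_of_nonneg (ae_of_all _ fun x => (exp_pos _).le)
    (integrable_exp_neg_sub_sq_div hσk (c k)) (ae_of_all _ fun x => ?_)
  rw [exp_le_exp, neg_le_neg_iff]
  exact single_le_sum (f := fun i => (c i - x) ^ 2 / (2 * σ i ^ 2))
    (fun i _ => by positivity) hk

theorem exists_mem_le_prod_rpow_inv_card {ι : Type*} {s : Finset ι} (hs : s.Nonempty) {σ : ι → ℝ}
    (hσ : ∀ i ∈ s, 0 < σ i) : ∃ k ∈ s, σ k ≤ ∏ i ∈ s, σ i ^ (#s : ℝ)⁻¹ := by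
  obtain ⟨k, hk, hmin⟩ := s.exists_min_image σ hs
  refine ⟨k, hk, ?_⟩
  have hcard : (#s : ℝ) ≠ 0 := by exact_mod_cast hs.card_pos.ne'
  calc σ k = ∏ _i ∈ s, σ k ^ (#s : ℝ)⁻¹ := by
        rw [prod_const, ← rpow_natCast, ← rpow_mul (hσ k hk).le, inv_mul_cancel₀ hcard,
          rpow_one]
    _ ≤ ∏ i ∈ s, σ i ^ (#s : ℝ)⁻¹ :=
        prod_le_prod (fun _ _ => by have := hσ k hk; positivity)
          fun i hi => rpow_le_rpow (hσ k hk).le (hmin i hi) (by positivity)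

theorem integral_exp_neg_sum_sq_div_le {ι : Type*} {s : Finset ι} (hs : s.Nonempty)
    {σ : ι → ℝ} (hσ : ∀ i ∈ s, 0 < σ i) (c : ι → ℝ) :
    ∫ x : ℝ, exp (-∑ i ∈ s, (c i - x) ^ 2 / (2 * σ i ^ 2))
      ≤ √(2 * π) * ∏ i ∈ s, σ i ^ (#s : ℝ)⁻¹ := by
  obtain ⟨k, hk, hle⟩ := exists_mem_le_prod_rpow_inv_card hs hσ
  exact (integral_exp_neg_sum_sq_div_le_of_mem hk (hσ k hk) c).trans
    (mul_le_mul_of_nonneg_left hle (sqrt_nonneg _))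

theorem integral_exp_neg_sum_sum_sq_div_le {ι κ : Type*} [Fintype ι] [Fintype κ] [DecidableEq κ]
    (J : ι → Finset κ) (hI : ∀ j, ({i | j ∈ J i} : Finset ι).Nonempty) {σ : ι → ℝ}
    (hσ : ∀ i, 0 < σ i) (r : ι → κ → ℝ) :
    ∫ G : κ → ℝ, exp (-∑ i, ∑ j ∈ J i, (r i j - G j) ^ 2 / (2 * σ i ^ 2))
      ≤ √(2 * π) ^ Fintype.card κ * ∏ i, σ i ^ ∑ j ∈ J i, (#{i' | j ∈ J i'} : ℝ)⁻¹ := by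
  have hswap : ∀ G : κ → ℝ, ∑ i, ∑ j ∈ J i, (r i j - G j) ^ 2 / (2 * σ i ^ 2)
      = ∑ j, ∑ i ∈ {i | j ∈ J i}, (r i j - G j) ^ 2 / (2 * σ i ^ 2) :=
    fun G => sum_comm' (by simp)
  calc ∫ G : κ → ℝ, exp (-∑ i, ∑ j ∈ J i, (r i j - G j) ^ 2 / (2 * σ i ^ 2))
      = ∫ G : κ → ℝ, ∏ j, exp (-∑ i ∈ {i | j ∈ J i}, (r i j - G j) ^ 2 / (2 * σ i ^ 2)) := by
        congr 1 with G
        rw [hswap, ← sum_neg_distrib, exp_sum]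
    _ = ∏ j, ∫ x : ℝ, exp (-∑ i ∈ {i | j ∈ J i}, (r i j - x) ^ 2 / (2 * σ i ^ 2)) :=
        integral_fintype_prod_volume_eq_prod
          (fun j x => exp (-∑ i ∈ {i | j ∈ J i}, (r i j - x) ^ 2 / (2 * σ i ^ 2)))
    _ ≤ ∏ j, (√(2 * π) * ∏ i ∈ {i | j ∈ J i}, σ i ^ (#{i' | j ∈ J i'} : ℝ)⁻¹) :=
        prod_le_prod (fun _ _ => integral_nonneg fun _ => (exp_pos _).le)
          fun j _ => integral_exp_neg_sum_sq_div_le (hI j) (fun i _ => hσ i) (r · j)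
    _ = √(2 * π) ^ Fintype.card κ * ∏ i, σ i ^ ∑ j ∈ J i, (#{i' | j ∈ J i'} : ℝ)⁻¹ := by
        rw [prod_mul_distrib, prod_const, card_univ, prod_comm' (t' := univ) (s' := J) (by simp)]
        simp_rw [rpow_sum_of_pos (hσ _)]

theorem integrable_pi_exp_neg_sum_sq_div {ι : Type*} [Fintype ι] {τ : ι → ℝ} (hτ : ∀ i, 0 < τ i)
    (b : ι → ℝ) : Integrable fun B : ι → ℝ => exp (-∑ i, (b i - B i) ^ 2 / (2 * τ i ^ 2)) := by
  simp_rw [← sum_neg_distrib, exp_sum]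
  exact Integrable.fintype_prod (f := fun i x => exp (-((b i - x) ^ 2 / (2 * τ i ^ 2))))
    fun i => integrable_exp_neg_sub_sq_div (hτ i) (b i)

theorem integral_pi_exp_neg_sum_sq_div {ι : Type*} [Fintype ι] {τ : ι → ℝ} (hτ : ∀ i, 0 < τ i)
    (b : ι → ℝ) :
    ∫ B : ι → ℝ, exp (-∑ i, (b i - B i) ^ 2 / (2 * τ i ^ 2)) = ∏ i, √(2 * π) * τ i := by
  simp_rw [← sum_neg_distrib, exp_sum]
  rw [integral_fintype_prod_volume_eq_prod (fun i x => exp (-((b i - x) ^ 2 / (2 * τ i ^ 2))))]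
  exact prod_congr rfl fun i _ => integral_exp_neg_sub_sq_div (hτ i) (b i)

theorem exp_posterior_exponent_eq {ι κ : Type*} [Fintype ι] (J : ι → Finset κ)
    (r : ι → κ → ℝ) (G : κ → ℝ) (q σ : ι → ℝ) (β : ℝ) :
    exp (-(1 / 2) * ∑ i, ∑ j ∈ J i, (r i j - G j) ^ 2 / σ i ^ 2 - ∑ i, (q i + β / σ i ^ 2))
      = (∏ i, exp (-β / σ i ^ 2)) * exp (-∑ i, q i)
        * exp (-∑ i, ∑ j ∈ J i, (r i j - G j) ^ 2 / (2 * σ i ^ 2)) := by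
  have hdata : (1 / 2 : ℝ) * ∑ i, ∑ j ∈ J i, (r i j - G j) ^ 2 / σ i ^ 2
      = ∑ i, ∑ j ∈ J i, (r i j - G j) ^ 2 / (2 * σ i ^ 2) := by
    simp only [mul_sum]
    exact sum_congr rfl fun i _ => sum_congr rfl fun j _ => by ring
  rw [← exp_sum, ← exp_add, ← exp_add, sum_add_distrib, neg_mul, hdata]
  simp only [neg_div, sum_neg_distrib]
  ring_nf

theorem marginal_posterior_dominated_general
    (N M : ℕ)
    (J : Fin N → Finset (Fin M))
    (y : Fin N → Fin M → ℝ) (b : Fin N → ℝ)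
    (τ : Fin N → ℝ) (hτ : ∀ i, 0 < τ i)
    (α β : ℝ)
    (hI : ∀ j : Fin M, 1 ≤ (Finset.univ.filter (fun i => j ∈ J i)).card)
    (p : (Fin N → ℝ) → (Fin M → ℝ) → (Fin N → ℝ) → ℝ)
    (hp : ∀ (B : Fin N → ℝ) (G : Fin M → ℝ) (σ : Fin N → ℝ),
      p B G σ =
        (∏ i, σ i ^ (-((J i).card : ℝ) - 2 - 2 * α)) *
          Real.exp (-(1/2) * ∑ i, ∑ j ∈ J i, (y i j + σ i ^ 2 / 2 - B i - G j) ^ 2 / σ i ^ 2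
            - ∑ i, ((b i - B i) ^ 2 / (2 * τ i ^ 2) + β / σ i ^ 2))) :
    ∃ C : ℝ, ∀ σ : Fin N → ℝ, (∀ i, 0 < σ i) →
      (∫ B : Fin N → ℝ, ∫ G : Fin M → ℝ, p B G σ)
        ≤ C * ∏ i,
            σ i ^ (-((J i).card : ℝ) - 2 - 2 * α
                + ∑ j ∈ J i, ((Finset.univ.filter (fun i' => j ∈ J i')).card : ℝ)⁻¹)
              * Real.exp (-β / σ i ^ 2) := by
  refine ⟨√(2 * π) ^ M * ∏ i, √(2 * π) * τ i, fun σ hσ => ?_⟩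
  set K := ∏ i, σ i ^ (-((J i).card : ℝ) - 2 - 2 * α) * exp (-β / σ i ^ 2)
  set D := √(2 * π) ^ M * ∏ i, σ i ^ ∑ j ∈ J i, (#{i' | j ∈ J i'} : ℝ)⁻¹
  have hK : 0 < K := prod_pos fun i _ => mul_pos (rpow_pos_of_pos (hσ i) _) (exp_pos _)
  set prior := fun B : Fin N → ℝ => exp (-∑ i, (b i - B i) ^ 2 / (2 * τ i ^ 2))
  have hfactor : ∀ B G, p B G σ = K * prior B
      * exp (-∑ i, ∑ j ∈ J i, (y i j + σ i ^ 2 / 2 - B i - G j) ^ 2 / (2 * σ i ^ 2)) := by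
    intro B G
    rw [hp, exp_posterior_exponent_eq J (fun i j => y i j + σ i ^ 2 / 2 - B i)]
    simp only [K, prior, prod_mul_distrib]
    ring
  have hinner : ∀ B, ∫ G : Fin M → ℝ, p B G σ ≤ K * D * prior B := by
    intro B
    simp_rw [hfactor B, integral_const_mul, mul_right_comm K D]
    refine mul_le_mul_of_nonneg_left ?_ (mul_nonneg hK.le (exp_pos _).le)
    simpa only [Fintype.card_fin] using integral_exp_neg_sum_sum_sq_div_le J
      (fun j => card_pos.mp (hI j)) hσ (fun i j => y i j + σ i ^ 2 / 2 - B i)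
  calc (∫ B : Fin N → ℝ, ∫ G : Fin M → ℝ, p B G σ)
      ≤ ∫ B : Fin N → ℝ, K * D * prior B :=
        integral_mono_of_nonneg
          (ae_of_all _ fun B => integral_nonneg fun G => by
            rw [hfactor]; exact mul_nonneg (mul_nonneg hK.le (exp_pos _).le) (exp_pos _).le)
          ((integrable_pi_exp_neg_sum_sq_div hτ b).const_mul _) (ae_of_all _ hinner)
    _ = K * D * ∏ i, √(2 * π) * τ i := by
        rw [integral_const_mul, integral_pi_exp_neg_sum_sq_div hτ b]
    _ = _ := by
        simp only [K, D, rpow_add (hσ _), prod_mul_distrib]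
        ring

/-- Domination of the marginal posterior of the variances: if every source is observed by
at least one instrument, then integrating the unnormalized posterior over `(B, G)` yields a
function of `σ` dominated by `C` times a product of inverse-Gamma kernels
`σ_i^{-|J_i| - 2 - 2α + Σ_{j ∈ J_i} |I_j|^{-1}} exp(-β/σ_i²)`. -/
theorem marginal_posterior_dominated
    (N M : ℕ) (hN : 1 ≤ N) (hM : 1 ≤ M)
    (J : Fin N → Finset (Fin M))
    (y : Fin N → Fin M → ℝ) (b : Fin N → ℝ)
    (τ : Fin N → ℝ) (hτ : ∀ i, 0 < τ i)
    (α β : ℝ) (hα : 0 < α) (hβ : 0 < β)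
    (hI : ∀ j : Fin M, 1 ≤ (Finset.univ.filter (fun i => j ∈ J i)).card)
    (p : (Fin N → ℝ) → (Fin M → ℝ) → (Fin N → ℝ) → ℝ)
    (hp : ∀ (B : Fin N → ℝ) (G : Fin M → ℝ) (σ : Fin N → ℝ),
      p B G σ =
        (∏ i, σ i ^ (-((J i).card : ℝ) - 2 - 2 * α)) *
          Real.exp (-(1/2) * ∑ i, ∑ j ∈ J i, (y i j + σ i ^ 2 / 2 - B i - G j) ^ 2 / σ i ^ 2
            - ∑ i, ((b i - B i) ^ 2 / (2 * τ i ^ 2) + β / σ i ^ 2))) :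
    ∃ C : ℝ, ∀ σ : Fin N → ℝ, (∀ i, 0 < σ i) →
      (∫ B : Fin N → ℝ, ∫ G : Fin M → ℝ, p B G σ)
        ≤ C * ∏ i,
            σ i ^ (-((J i).card : ℝ) - 2 - 2 * α
                + ∑ j ∈ J i, ((Finset.univ.filter (fun i' => j ∈ J i')).card : ℝ)⁻¹)
              * Real.exp (-β / σ i ^ 2) :=
  marginal_posterior_dominated_general N M J y b τ hτ α β hI p hp
end

section
/- Proposition (closed-form posterior covariance, full observation): let N, M ≥ 1, σ_i > 0 and τ_i > 0 for 1 ≤ i ≤ N, and let Ω be the (N+M)×(N+M) symmetric matrix with Ω_{i,i} = Mσ_i^{-2} + τ_i^{-2} (1 ≤ i ≤ N), Ω_{N+j,N+j} = Σ_{u=1}^N σ_u^{-2} (1 ≤ j ≤ M), Ω_{i,N+j} = Ω_{N+j,i} = σ_i^{-2}, and all other entries zero. Set W_i = Mσ_i^{-2}/(Mσ_i^{-2} + τ_i^{-2}) and S = Σ_{u=1}^N τ_u^{-2} W_u. Then Ω is invertible and its inverse satisfies, for all 1 ≤ i, i' ≤ N (i ≠ i') and 1 ≤ j, j' ≤ M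 (j ≠ j'): (Ω^{-1})_{i,i} = (Mσ_i^{-2} + τ_i^{-2})^{-1} (1 + Mσ_i^{-2} W_i / S); (Ω^{-1})_{i,i'} = W_i W_{i'} / S; (Ω^{-1})_{i,N+j} = −W_i / S; (Ω^{-1})_{N+j,N+j} = (Σ_{u=1}^N σ_u^{-2})^{-1} (1 + Σ_{u=1}^N W_u σ_u^{-2} / S); (Ω^{-1})_{N+j,N+j'} = (Σ_{u=1}^N σ_u^{-2})^{-1} Σ_{u=1}^N W_u σ_u^{-2} / S. -/
/-!
Write `d i = m c i + e i` with `c i = σ_i⁻²`, `e i = τ_i⁻²` and `m = M`, so that `Ω` has the block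
form `[[diag d, c 𝟙ᵀ], [𝟙 cᵀ, t I]]` with `t = Σ c`. The claimed inverse is a diagonal-plus-rank-one
correction in each block, and multiplying out reduces every block of `Ω * Ω⁻¹ = 1` to the two
scalar identities `W i * d i = m c i` and its sum `S + m Σ W c = m t`.
-/

open Matrix

namespace FullObservation

variable {K ι : Type*} (κ : Type*) [Field K] [Fintype ι] [Fintype κ] [DecidableEq ι]
  [DecidableEq κ]

def precision (c e : ι → K) : Matrix (ι ⊕ κ) (ι ⊕ κ) K :=
  fromBlocks (diagonal fun i => (Fintype.card κ : K) * c i + e i) (of fun i _ => c i)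
    (of fun _ i => c i) ((∑ i, c i) • 1)

def covariance (c e W : ι → K) : Matrix (ι ⊕ κ) (ι ⊕ κ) K :=
  let S := ∑ i, W i * e i
  fromBlocks
    (diagonal (fun i => ((Fintype.card κ : K) * c i + e i)⁻¹) + of fun i i' => W i * W i' / S)
    (of fun i _ => -W i / S) (of fun _ i => -W i / S)
    ((∑ i, c i)⁻¹ • (1 + of fun _ _ => (∑ i, W i * c i) / S))

variable {κ} {c e W : ι → K}

theorem precision_mul_covariance
    (hd : ∀ i, (Fintype.card κ : K) * c i + e i ≠ 0)
    (hW : ∀ i, W i * ((Fintype.card κ : K) * c i + e i) = Fintype.card κ * c i)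
    (ht : ∑ i, c i ≠ 0) (hS : ∑ i, W i * e i ≠ 0) :
    precision κ c e * covariance κ c e W = 1 := by
  rw [precision, covariance, fromBlocks_multiply, ← fromBlocks_one]
  set m : K := (Fintype.card κ : K) with hm_def
  set t := ∑ i, c i
  set S := ∑ i, W i * e i
  set R := ∑ i, W i * c i
  have key : S + m * R = m * t := by
    simp only [S, R, t, Finset.mul_sum, ← Finset.sum_add_distrib]
    exact Finset.sum_congr rfl fun i _ => by linear_combination hW i
  have hm : m ≠ 0 := by
    rintro hm
    refine hS (Finset.sum_eq_zero fun i _ => ?_)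
    simpa only [hm, zero_mul, zero_add] using hW i
  have hR : ∀ a, ∑ k, c k * (W k * a / S) = R * a / S := fun a => by
    simp only [R, Finset.sum_div, Finset.sum_mul]
    exact Finset.sum_congr rfl fun k _ => by ring
  congr 1 <;> ext i j
  · simp only [Matrix.mul_apply, of_apply, Matrix.add_apply, diagonal_apply, Finset.sum_const,
      Finset.card_univ, nsmul_eq_mul, one_apply, ite_mul, zero_mul, Finset.sum_ite_eq,
      Finset.mem_univ, if_true, ← hm_def]
    have hdi := hd i
    rcases eq_or_ne i j with rfl | hij
    · rw [if_pos rfl, if_pos rfl]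
      field_simp
      linear_combination W i * hW i
    · rw [if_neg hij, if_neg hij]
      field_simp
      linear_combination W j * hW i
  · simp only [Matrix.mul_apply, of_apply, diagonal_apply, Finset.sum_const, Finset.card_univ,
      nsmul_eq_mul, Matrix.add_apply, one_apply, Matrix.smul_apply, smul_eq_mul, mul_add,
      Finset.sum_add_distrib, Finset.sum_ite_eq, Finset.sum_ite_eq', Finset.mem_univ, if_true,
      mul_ite, mul_one, mul_zero, ite_mul, zero_mul, Matrix.zero_apply, ← hm_def]
    field_simp
    linear_combination c i * key - t * hW i
  · rw [Matrix.smul_mul, Matrix.one_mul]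
    simp only [Matrix.mul_apply, of_apply, Matrix.add_apply, diagonal_apply, mul_add,
      Finset.sum_add_distrib, mul_ite, mul_zero, Finset.sum_ite_eq', Finset.mem_univ, if_true,
      Matrix.smul_apply, smul_eq_mul, Matrix.zero_apply, hR]
    have hcd : c j * (m * c j + e j)⁻¹ = W j / m := by
      rw [← div_eq_mul_inv, div_eq_div_iff (hd j) hm]
      linear_combination -hW j
    rw [hcd]
    field_simp
    linear_combination W j * key
  · rw [Matrix.smul_mul, Matrix.one_mul, smul_smul, mul_inv_cancel₀ ht, one_smul]
    have hRneg : ∑ k, c k * (-W k / S) = -R / S := by simpa using hR (-1)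
    simp only [Matrix.add_apply, Matrix.mul_apply, of_apply, hRneg]
    ring

theorem precision_mul_covariance_of_pos [LinearOrder K] [IsStrictOrderedRing K] [Nonempty ι]
    [Nonempty κ] (hc : ∀ i, 0 < c i) (he : ∀ i, 0 < e i)
    (hW : ∀ i, W i * ((Fintype.card κ : K) * c i + e i) = Fintype.card κ * c i) :
    precision κ c e * covariance κ c e W = 1 := by
  have hm : (0 : K) < Fintype.card κ := by exact_mod_cast Fintype.card_pos
  have hd : ∀ i, 0 < (Fintype.card κ : K) * c i + e i := fun i => by
    have := hc i; have := he i; positivity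
  have hWpos : ∀ i, 0 < W i := fun i =>
    pos_of_mul_pos_left ((hW i).symm ▸ mul_pos hm (hc i)) (hd i).le
  refine precision_mul_covariance (fun i => (hd i).ne') hW
    (Finset.sum_pos (fun i _ => hc i) Finset.univ_nonempty).ne' ?_
  exact (Finset.sum_pos (fun i _ => mul_pos (hWpos i) (he i)) Finset.univ_nonempty).ne'

end FullObservation

open FullObservation in
/-- Closed-form posterior covariance under full observation: the precision matrix `Ω` of
`(B, G)` is invertible and the entries of its inverse are given in closed form in terms of
the shrinkage weights `W_i` and `S = Σ_u τ_u^{-2} W_u`. -/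
theorem posterior_covariance_closed_form
    (N M : ℕ) (hN : 1 ≤ N) (hM : 1 ≤ M)
    (σ τ : Fin N → ℝ) (hσ : ∀ i, 0 < σ i) (hτ : ∀ i, 0 < τ i)
    (Ω : Matrix (Fin N ⊕ Fin M) (Fin N ⊕ Fin M) ℝ)
    (hΩ1 : ∀ i i' : Fin N, Ω (Sum.inl i) (Sum.inl i')
      = if i = i' then (M : ℝ) / σ i ^ 2 + 1 / τ i ^ 2 else 0)
    (hΩ2 : ∀ j j' : Fin M, Ω (Sum.inr j) (Sum.inr j')
      = if j = j' then ∑ u, 1 / σ u ^ 2 else 0)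
    (hΩ3 : ∀ (i : Fin N) (j : Fin M), Ω (Sum.inl i) (Sum.inr j) = 1 / σ i ^ 2)
    (hΩ4 : ∀ (j : Fin M) (i : Fin N), Ω (Sum.inr j) (Sum.inl i) = 1 / σ i ^ 2)
    (W : Fin N → ℝ)
    (hW : ∀ i, W i = ((M : ℝ) / σ i ^ 2) / ((M : ℝ) / σ i ^ 2 + 1 / τ i ^ 2))
    (S : ℝ) (hS : S = ∑ u, W u / τ u ^ 2) :
    IsUnit Ω.det ∧
    (∀ i, Ω⁻¹ (Sum.inl i) (Sum.inl i)
      = ((M : ℝ) / σ i ^ 2 + 1 / τ i ^ 2)⁻¹ * (1 + ((M : ℝ) / σ i ^ 2) * W i / S)) ∧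
    (∀ i i', i ≠ i' → Ω⁻¹ (Sum.inl i) (Sum.inl i') = W i * W i' / S) ∧
    (∀ i j, Ω⁻¹ (Sum.inl i) (Sum.inr j) = -(W i) / S) ∧
    (∀ j, Ω⁻¹ (Sum.inr j) (Sum.inr j)
      = (∑ u, 1 / σ u ^ 2)⁻¹ * (1 + (∑ u, W u / σ u ^ 2) / S)) ∧
    (∀ j j', j ≠ j' → Ω⁻¹ (Sum.inr j) (Sum.inr j')
      = (∑ u, 1 / σ u ^ 2)⁻¹ * ((∑ u, W u / σ u ^ 2) / S)) := by
  have : Nonempty (Fin N) := ⟨⟨0, hN⟩⟩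
  have : Nonempty (Fin M) := ⟨⟨0, hM⟩⟩
  have hd : ∀ i, 0 < (M : ℝ) / σ i ^ 2 + 1 / τ i ^ 2 := fun i => by
    have := hσ i; have := hτ i; positivity
  have hΩ : Ω = precision (Fin M) (fun i => 1 / σ i ^ 2) (fun i => 1 / τ i ^ 2) := by
    ext (i | j) (i' | j') <;>
      simp [precision, hΩ1, hΩ2, hΩ3, hΩ4, diagonal_apply, one_apply, div_eq_mul_inv]
  have hmul : Ω * covariance (Fin M) (fun i => 1 / σ i ^ 2) (fun i => 1 / τ i ^ 2) W = 1 :=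
    hΩ ▸ precision_mul_covariance_of_pos (fun i => by have := hσ i; positivity)
      (fun i => by have := hτ i; positivity) fun i => by
        rw [Fintype.card_fin, mul_one_div, hW, div_mul_cancel₀ _ (hd i).ne']
  have hinv := inv_eq_right_inv hmul
  simp only [covariance, Fintype.card_fin, mul_one_div, ← hS] at hinv
  refine ⟨isUnit_det_of_right_inverse hmul, fun i => ?_, fun i i' hii' => ?_, fun i j => ?_,
    fun j => ?_, fun j j' hjj' => ?_⟩ <;>
    simp only [hinv, fromBlocks_apply₁₁, fromBlocks_apply₁₂, fromBlocks_apply₂₂, Matrix.add_apply,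
      Matrix.smul_apply, of_apply, smul_eq_mul, diagonal_apply_eq, one_apply_eq]
  · have hdi := (hd i).ne'
    rw [hW i]
    field_simp
  · rw [diagonal_apply_ne _ hii', zero_add]
  · rw [one_apply_ne hjj', zero_add]
end

section
/- Homogeneous-variance specialization: let N, M ≥ 1 and σ, τ > 0, and let Ω be the (N+M)×(N+M) symmetric matrix with Ω_{i,i} = Mσ^{-2} + τ^{-2} (1 ≤ i ≤ N), Ω_{N+j,N+j} = Nσ^{-2} (1 ≤ j ≤ M), Ω_{i,N+j} = Ω_{N+j,i} = σ^{-2}, and all other entries zero. Then Ω is invertible with (Ω^{-1})_{i,i} = (Mσ^{-2} + τ^{-2})^{-1} ( 1 + Mσ^{-2}/(Nτ^{-2}) ), (Ω^{-1})_{i,N+j} = −τ²/N, and (Ω^{-1})_{N+j,N+j} = (σ² + τ²)/N, for all 1 ≤ i ≤ N and 1 ≤ j ≤ M. In particular Var(B̂_i) = (Mσ^{-2}+τ^{-2})^{-1}(1 + Mσ^{-2}/(Nτ^{-2})) and Cov(B̂_i, Ĝ_j) = −τ²/N. -/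
/-!
With `a = M/σ² + 1/τ²`, `b = N/σ²`, `c = 1/σ²` and `J` the all-ones matrices, `Ω` is the block
matrix `[[a I, c J], [c J, b I]]`. Since `J J = (size) J`, the inverse stays in this family:
`[[a⁻¹ I + p J, q J], [q J, b⁻¹ I + r J]]`, and `Ω Ω⁻¹ = 1` reduces to scalar equations in
`p, q, r`, solved by `q = -c/d`, `p = c² M/(a d)`, `r = c² N/(b d)` with
`d = a b - c² N M = N/(σ² τ²)`.
-/

open Matrix

section

variable {K : Type*} [Field K] {l n m : Type*} [Fintype n]

theorem Matrix.of_const_mul_of_const (x y : K) :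
    (of fun _ _ => x : Matrix l n K) * (of fun _ _ => y : Matrix n m K) =
      of fun _ _ => Fintype.card n * (x * y) := by
  ext i j
  simp [mul_apply]

variable [Fintype m] [DecidableEq n] [DecidableEq m]

theorem Matrix.fromBlocks_smul_one_const_mul_eq_one {a b c d : K} (ha : a ≠ 0) (hb : b ≠ 0)
    (hd : a * b - c ^ 2 * Fintype.card n * Fintype.card m = d) (hd0 : d ≠ 0) :
    fromBlocks (a • 1 : Matrix n n K) (of fun _ _ => c) (of fun _ _ => c) (b • 1 : Matrix m m K) *
      fromBlocks (a⁻¹ • 1 + of fun _ _ => c ^ 2 * Fintype.card m / (a * d)) (of fun _ _ => -c / d)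
        (of fun _ _ => -c / d) (b⁻¹ • 1 + of fun _ _ => c ^ 2 * Fintype.card n / (b * d)) = 1 := by
  rw [fromBlocks_multiply, ← fromBlocks_one]
  simp only [Matrix.mul_add, Matrix.smul_mul, Matrix.one_mul, Matrix.mul_smul, Matrix.mul_one,
    of_const_mul_of_const, smul_smul]
  subst hd
  congr 1 <;> ext i j <;> simp [smul_of] <;> field_simp <;> ring

end

theorem homogeneous_posterior_covariance_general
    (N M : ℕ) (hN : 1 ≤ N)
    (σ τ : ℝ) (hσ : 0 < σ) (hτ : 0 < τ)
    (Ω : Matrix (Fin N ⊕ Fin M) (Fin N ⊕ Fin M) ℝ)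
    (hΩ1 : ∀ i i' : Fin N, Ω (Sum.inl i) (Sum.inl i')
      = if i = i' then (M : ℝ) / σ ^ 2 + 1 / τ ^ 2 else 0)
    (hΩ2 : ∀ j j' : Fin M, Ω (Sum.inr j) (Sum.inr j')
      = if j = j' then (N : ℝ) / σ ^ 2 else 0)
    (hΩ3 : ∀ (i : Fin N) (j : Fin M), Ω (Sum.inl i) (Sum.inr j) = 1 / σ ^ 2)
    (hΩ4 : ∀ (j : Fin M) (i : Fin N), Ω (Sum.inr j) (Sum.inl i) = 1 / σ ^ 2) :
    IsUnit Ω.det ∧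
    (∀ i, Ω⁻¹ (Sum.inl i) (Sum.inl i)
      = ((M : ℝ) / σ ^ 2 + 1 / τ ^ 2)⁻¹ * (1 + ((M : ℝ) / σ ^ 2) / ((N : ℝ) / τ ^ 2))) ∧
    (∀ (i : Fin N) (j : Fin M), Ω⁻¹ (Sum.inl i) (Sum.inr j) = -(τ ^ 2) / N) ∧
    (∀ j, Ω⁻¹ (Sum.inr j) (Sum.inr j) = (σ ^ 2 + τ ^ 2) / N) := by
  have hN0 : (N : ℝ) ≠ 0 := by positivity
  have hΩ : Ω = fromBlocks (((M : ℝ) / σ ^ 2 + 1 / τ ^ 2) • 1) (of fun _ _ => 1 / σ ^ 2)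
      (of fun _ _ => 1 / σ ^ 2) (((N : ℝ) / σ ^ 2) • 1) := by
    ext (i | j) (i' | j') <;> simp [hΩ1, hΩ2, hΩ3, hΩ4, one_apply]
  have hmul := hΩ ▸ fromBlocks_smul_one_const_mul_eq_one (by positivity) (by positivity)
    (d := N / (σ ^ 2 * τ ^ 2)) (by simp only [Fintype.card_fin]; field_simp; ring) (by positivity)
  have hinv := inv_eq_right_inv hmul
  refine ⟨isUnit_det_of_right_inverse hmul, fun i => ?_, fun i j => ?_, fun j => ?_⟩ <;>
    simp [hinv] <;> field_simp

/-- Homogeneous-variance specialization of the posterior covariance: with equal variances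
`σ` and `τ`, `Ω` is invertible with `Var(B̂_i) = (Mσ^{-2}+τ^{-2})^{-1}(1 + Mσ^{-2}/(Nτ^{-2}))`,
`Cov(B̂_i, Ĝ_j) = -τ²/N` and `Var(Ĝ_j) = (σ² + τ²)/N`. -/
theorem homogeneous_posterior_covariance
    (N M : ℕ) (hN : 1 ≤ N) (hM : 1 ≤ M)
    (σ τ : ℝ) (hσ : 0 < σ) (hτ : 0 < τ)
    (Ω : Matrix (Fin N ⊕ Fin M) (Fin N ⊕ Fin M) ℝ)
    (hΩ1 : ∀ i i' : Fin N, Ω (Sum.inl i) (Sum.inl i')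
      = if i = i' then (M : ℝ) / σ ^ 2 + 1 / τ ^ 2 else 0)
    (hΩ2 : ∀ j j' : Fin M, Ω (Sum.inr j) (Sum.inr j')
      = if j = j' then (N : ℝ) / σ ^ 2 else 0)
    (hΩ3 : ∀ (i : Fin N) (j : Fin M), Ω (Sum.inl i) (Sum.inr j) = 1 / σ ^ 2)
    (hΩ4 : ∀ (j : Fin M) (i : Fin N), Ω (Sum.inr j) (Sum.inl i) = 1 / σ ^ 2) :
    IsUnit Ω.det ∧
    (∀ i, Ω⁻¹ (Sum.inl i) (Sum.inl i)
      = ((M : ℝ) / σ ^ 2 + 1 / τ ^ 2)⁻¹ * (1 + ((M : ℝ) / σ ^ 2) / ((N : ℝ) / τ ^ 2))) ∧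
    (∀ (i : Fin N) (j : Fin M), Ω⁻¹ (Sum.inl i) (Sum.inr j) = -(τ ^ 2) / N) ∧
    (∀ j, Ω⁻¹ (Sum.inr j) (Sum.inr j) = (σ ^ 2 + τ ^ 2) / N) :=
  homogeneous_posterior_covariance_general N M hN σ τ hσ hτ Ω hΩ1 hΩ2 hΩ3 hΩ4
end

section
/- Quantitative asymptotic orders of the MLE covariance: let N, M ≥ 1 and suppose σ_i, τ_i > 0 satisfy 0 < c₁ ≤ σ_i/τ_i ≤ c₂ and σ_i ≤ u for all 1 ≤ i ≤ N. With Ω the full-observation precision matrix and W_i = Mσ_i^{-2}/(Mσ_i^{-2}+τ_i^{-2}), S = Σ_u τ_u^{-2}W_u, the entries of Ω^{-1} satisfy: (i) (Ω^{-1})_{N+j,N+j} ≤ u²(1 + c₁^{-2})/N; (ii) |(Ω^{-1})_{i,N+j}| ≤ u²(1 + c₂²)/(c₁² N); (iii) (Ω^{-1})_{i,i} ≤ u² ( 1/M + (1 + c₂²)/(c₁² N) ). Hence Var(Ĝ_j) = O(N^{-1}), Cov(B̂_i, Ĝ_j) = −O(N^{-1}), and Var(B̂_i) = O(N^{-1}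 + M^{-1}) as N, M → ∞. -/
/-!
`Ω` has a diagonal block `D`, rank-one off-diagonal blocks and the scalar block `S • 1` with
`S = ∑ₖ σₖ⁻²`, so its inverse is explicit: the Schur complement of `D` is `S • 1 - s • J`, with
`s = ∑ₖ σₖ⁻⁴ / Dₖₖ` and `J` the all-ones matrix, and Sherman–Morrison inverts it with the single
scalar denominator `T = S - M s = ∑ₖ 1 / (M τₖ² + σₖ²)`. Every entry bound then reduces to
termwise estimates coming from `c₁² τᵢ² ≤ σᵢ² ≤ u²`: `T ≥ N c₁² / (u² (M + c₁²))`,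
`S ≥ N / u²`, and each weight `σᵢ⁻² / Dᵢᵢ` is at most `1 / (M + c₁²)`.
-/

open Matrix

namespace Matrix
variable {ι κ K : Type*} [Fintype ι] [Fintype κ] [DecidableEq ι] [DecidableEq κ] [Field K]

theorem inv_fromBlocks_diagonal_vecMulVec {d a : ι → K} {S s T : K}
    (hd : ∀ i, d i ≠ 0) (hS : S ≠ 0) (hT : T ≠ 0) (hs : ∑ i, a i ^ 2 / d i = s)
    (hST : S - Fintype.card κ * s = T) :
    (fromBlocks (diagonal d) (vecMulVec a 1) (vecMulVec 1 a) (S • (1 : Matrix κ κ K)))⁻¹ =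
      fromBlocks (diagonal d⁻¹ + (Fintype.card κ / T) • vecMulVec (a / d) (a / d))
        (-T⁻¹ • vecMulVec (a / d) 1) (-T⁻¹ • vecMulVec 1 (a / d))
        (S⁻¹ • 1 + (s / (S * T)) • vecMulVec 1 1) := by
  refine inv_eq_right_inv ?_
  have hsum (b c : K) : ∑ k, a k * (b * (a k / d k * c)) = b * s * c := by
    rw [← hs, Finset.mul_sum, Finset.sum_mul]; congr 1; ext i; ring
  rw [fromBlocks_multiply, ← fromBlocks_one]
  congr 1 <;> ext i j <;>
    simp [mul_apply, vecMulVec_apply, diagonal_apply, one_apply, Finset.sum_add_distrib, hsum,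
      mul_add]
  · have := hd i
    split_ifs with hij
    · subst hij; field_simp; ring
    · field_simp; ring
  · have := hd i
    field_simp
    linear_combination (-a i) * hST
  · have := hd j
    field_simp
    linear_combination (-a j) * hST
  · split_ifs <;> field_simp <;> linear_combination -hs
end Matrix

section Scalar
variable {m c u σ τ : ℝ}

theorem sq_mul_sq_le_of_le_div (hc : 0 ≤ c) (hτ : 0 < τ) (h : c ≤ σ / τ) :
    c ^ 2 * τ ^ 2 ≤ σ ^ 2 := by
  rw [← mul_pow]
  exact pow_le_pow_left₀ (by positivity) ((le_div_iff₀ hτ).mp h) 2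

theorem one_div_sq_div_precision_le (hσ : 0 < σ) (hτ : 0 < τ) (hm : 0 < m)
    (hlow : c ^ 2 * τ ^ 2 ≤ σ ^ 2) :
    1 / σ ^ 2 / (m / σ ^ 2 + 1 / τ ^ 2) ≤ 1 / (m + c ^ 2) := by
  rw [div_le_div_iff₀ (by positivity) (by positivity)]
  field_simp
  nlinarith

theorem one_div_precision_le (hσ : 0 < σ) (hτ : 0 < τ) (hm : 0 < m) (hu : σ ^ 2 ≤ u ^ 2) :
    1 / (m / σ ^ 2 + 1 / τ ^ 2) ≤ u ^ 2 / m := by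
  rw [div_le_div_iff₀ (by positivity) hm]
  field_simp
  nlinarith [mul_le_mul_of_nonneg_right hu (by positivity : 0 ≤ m * τ ^ 2), sq_nonneg (u * σ)]

theorem le_one_div_sq_sub_mul_sq_div_precision (hσ : 0 < σ) (hτ : 0 < τ) (hm : 0 ≤ m) (hc : 0 < c)
    (hlow : c ^ 2 * τ ^ 2 ≤ σ ^ 2) (hu : σ ^ 2 ≤ u ^ 2) :
    c ^ 2 / (u ^ 2 * (m + c ^ 2)) ≤
      1 / σ ^ 2 - m * ((1 / σ ^ 2) ^ 2 / (m / σ ^ 2 + 1 / τ ^ 2)) := by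
  have hu0 : 0 < u ^ 2 := lt_of_lt_of_le (by positivity) hu
  have hterm : 1 / σ ^ 2 - m * ((1 / σ ^ 2) ^ 2 / (m / σ ^ 2 + 1 / τ ^ 2))
      = 1 / (m * τ ^ 2 + σ ^ 2) := by
    field_simp
    ring
  rw [hterm, div_le_div_iff₀ (by positivity) (by positivity)]
  nlinarith [mul_le_mul_of_nonneg_left hlow hm, mul_le_mul_of_nonneg_left hu hm,
    mul_le_mul_of_nonneg_left hu (sq_nonneg c)]
end Scalar

section Sums
variable {ι : Type*} [Fintype ι] {m c u : ℝ} {σ τ : ι → ℝ}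

theorem card_div_sq_le_sum_one_div_sq (hσ : ∀ i, 0 < σ i) (hu : ∀ i, σ i ^ 2 ≤ u ^ 2) :
    Fintype.card ι / u ^ 2 ≤ ∑ i, 1 / σ i ^ 2 := by
  rw [div_eq_mul_one_div, ← nsmul_eq_mul, ← Finset.card_univ, ← Finset.sum_const]
  exact Finset.sum_le_sum fun i _ => one_div_le_one_div_of_le (by have := hσ i; positivity) (hu i)

theorem sum_sq_div_precision_le (hσ : ∀ i, 0 < σ i) (hτ : ∀ i, 0 < τ i) (hm : 0 < m)
    (hlow : ∀ i, c ^ 2 * τ i ^ 2 ≤ σ i ^ 2) :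
    ∑ i, (1 / σ i ^ 2) ^ 2 / (m / σ i ^ 2 + 1 / τ i ^ 2) ≤ (∑ i, 1 / σ i ^ 2) / (m + c ^ 2) := by
  rw [Finset.sum_div]
  refine Finset.sum_le_sum fun i _ => ?_
  have hσi := hσ i
  calc (1 / σ i ^ 2) ^ 2 / (m / σ i ^ 2 + 1 / τ i ^ 2)
      = 1 / σ i ^ 2 * (1 / σ i ^ 2 / (m / σ i ^ 2 + 1 / τ i ^ 2)) := by ring
    _ ≤ 1 / σ i ^ 2 * (1 / (m + c ^ 2)) := by
      gcongr ?_ * ?_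
      exact one_div_sq_div_precision_le hσi (hτ i) hm (hlow i)
    _ = 1 / σ i ^ 2 / (m + c ^ 2) := by ring

theorem card_mul_le_sum_sub_mul_sum (hσ : ∀ i, 0 < σ i) (hτ : ∀ i, 0 < τ i) (hm : 0 ≤ m)
    (hc : 0 < c) (hlow : ∀ i, c ^ 2 * τ i ^ 2 ≤ σ i ^ 2) (hu : ∀ i, σ i ^ 2 ≤ u ^ 2) :
    Fintype.card ι * (c ^ 2 / (u ^ 2 * (m + c ^ 2))) ≤
      ∑ i, 1 / σ i ^ 2 - m * ∑ i, (1 / σ i ^ 2) ^ 2 / (m / σ i ^ 2 + 1 / τ i ^ 2) := by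
  rw [Finset.mul_sum, ← Finset.sum_sub_distrib, ← nsmul_eq_mul, ← Finset.card_univ,
    ← Finset.sum_const]
  exact Finset.sum_le_sum fun i _ =>
    le_one_div_sq_sub_mul_sq_div_precision (hσ i) (hτ i) hm hc (hlow i) (hu i)

theorem sum_sub_mul_sum_pos [Nonempty ι] (hσ : ∀ i, 0 < σ i) (hτ : ∀ i, 0 < τ i) (hm : 0 ≤ m)
    (hc : 0 < c) (hlow : ∀ i, c ^ 2 * τ i ^ 2 ≤ σ i ^ 2) (hu : ∀ i, σ i ^ 2 ≤ u ^ 2) :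
    0 < ∑ i, 1 / σ i ^ 2 - m * ∑ i, (1 / σ i ^ 2) ^ 2 / (m / σ i ^ 2 + 1 / τ i ^ 2) := by
  have hu0 : 0 < u ^ 2 := (pow_pos (hσ (Classical.arbitrary ι)) 2).trans_le (hu _)
  exact lt_of_lt_of_le (by positivity) (card_mul_le_sum_sub_mul_sum hσ hτ hm hc hlow hu)

theorem mul_inv_sum_sub_mul_sum_le [Nonempty ι] (hσ : ∀ i, 0 < σ i) (hτ : ∀ i, 0 < τ i)
    (hm : 0 ≤ m) (hc : 0 < c) (hlow : ∀ i, c ^ 2 * τ i ^ 2 ≤ σ i ^ 2) (hu : ∀ i, σ i ^ 2 ≤ u ^ 2)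
    {x : ℝ} (hx : x ≤ 1 / (m + c ^ 2)) :
    x * (∑ i, 1 / σ i ^ 2 - m * ∑ i, (1 / σ i ^ 2) ^ 2 / (m / σ i ^ 2 + 1 / τ i ^ 2))⁻¹ ≤
      u ^ 2 / (c ^ 2 * Fintype.card ι) := by
  have hu0 : 0 < u ^ 2 := (pow_pos (hσ (Classical.arbitrary ι)) 2).trans_le (hu _)
  have hT := card_mul_le_sum_sub_mul_sum hσ hτ hm hc hlow hu
  have hT0 := sum_sub_mul_sum_pos hσ hτ hm hc hlow hu
  set T := ∑ i, 1 / σ i ^ 2 - m * ∑ i, (1 / σ i ^ 2) ^ 2 / (m / σ i ^ 2 + 1 / τ i ^ 2)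
  calc x * T⁻¹ ≤ 1 / (m + c ^ 2) * T⁻¹ := mul_le_mul_of_nonneg_right hx (by positivity)
    _ ≤ u ^ 2 / (c ^ 2 * Fintype.card ι) := by
      rw [← div_eq_mul_inv, div_div, div_le_div_iff₀ (by positivity) (by positivity)]
      rw [← mul_div_assoc, div_le_iff₀ (by positivity)] at hT
      linarith
end Sums

section Model
variable {ι κ : Type*} [Fintype ι] [Fintype κ] [DecidableEq ι] [DecidableEq κ]

noncomputable def fullPrecision (σ τ : ι → ℝ) : Matrix (ι ⊕ κ) (ι ⊕ κ) ℝ :=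
  fromBlocks (diagonal fun i => Fintype.card κ / σ i ^ 2 + 1 / τ i ^ 2)
    (vecMulVec (fun i => 1 / σ i ^ 2) 1) (vecMulVec 1 fun i => 1 / σ i ^ 2)
    ((∑ i, 1 / σ i ^ 2) • 1)

theorem fullPrecision_inv_le [Nonempty ι] [Nonempty κ] {c u : ℝ} {σ τ : ι → ℝ}
    (hσ : ∀ i, 0 < σ i) (hτ : ∀ i, 0 < τ i) (hc : 0 < c)
    (hlow : ∀ i, c ^ 2 * τ i ^ 2 ≤ σ i ^ 2) (hu : ∀ i, σ i ^ 2 ≤ u ^ 2) :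
    (∀ j, (fullPrecision (κ := κ) σ τ)⁻¹ (.inr j) (.inr j) ≤
      u ^ 2 / Fintype.card ι + u ^ 2 / (c ^ 2 * Fintype.card ι)) ∧
    (∀ i j, |(fullPrecision (κ := κ) σ τ)⁻¹ (.inl i) (.inr j)| ≤ u ^ 2 / (c ^ 2 * Fintype.card ι)) ∧
    (∀ i, (fullPrecision (κ := κ) σ τ)⁻¹ (.inl i) (.inl i) ≤
      u ^ 2 / Fintype.card κ + u ^ 2 / (c ^ 2 * Fintype.card ι)) := by
  set N : ℝ := (Fintype.card ι : ℝ)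
  set M : ℝ := (Fintype.card κ : ℝ)
  set S := ∑ i, 1 / σ i ^ 2
  set s := ∑ i, (1 / σ i ^ 2) ^ 2 / (M / σ i ^ 2 + 1 / τ i ^ 2)
  set T := S - M * s
  have hN : 0 < N := by positivity
  have hM : 0 < M := by positivity
  have hu0 : 0 < u ^ 2 := (pow_pos (hσ (Classical.arbitrary ι)) 2).trans_le (hu _)
  have hS : N / u ^ 2 ≤ S := card_div_sq_le_sum_one_div_sq hσ hu
  have hs : s ≤ S / (M + c ^ 2) := sum_sq_div_precision_le hσ hτ hM hlow
  have hS0 : 0 < S := lt_of_lt_of_le (by positivity) hS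
  have hT0 : 0 < T := sum_sub_mul_sum_pos hσ hτ hM.le hc hlow hu
  have hwi (i : ι) : 1 / σ i ^ 2 / (M / σ i ^ 2 + 1 / τ i ^ 2) ≤ 1 / (M + c ^ 2) :=
    one_div_sq_div_precision_le (hσ i) (hτ i) hM (hlow i)
  have hw {x : ℝ} (hx : x ≤ 1 / (M + c ^ 2)) : x * T⁻¹ ≤ u ^ 2 / (c ^ 2 * N) :=
    mul_inv_sum_sub_mul_sum_le hσ hτ hM.le hc hlow hu hx
  have hd (i : ι) : M / σ i ^ 2 + 1 / τ i ^ 2 ≠ 0 := by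
    have := hσ i; have := hτ i; positivity
  rw [fullPrecision, inv_fromBlocks_diagonal_vecMulVec hd hS0.ne' hT0.ne' rfl rfl]
  refine ⟨fun j => ?_, fun i j => ?_, fun i => ?_⟩ <;>
    simp only [fromBlocks_apply₁₁, fromBlocks_apply₁₂, fromBlocks_apply₂₂, Matrix.add_apply,
      Matrix.smul_apply, diagonal_apply_eq, vecMulVec_apply, one_apply_eq, Pi.inv_apply,
      Pi.div_apply, Pi.one_apply, smul_eq_mul, mul_one]
  · calc S⁻¹ + s / (S * T) = S⁻¹ + s / S * T⁻¹ := by rw [← div_div, div_eq_mul_inv (s / S)]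
      _ ≤ u ^ 2 / N + u ^ 2 / (c ^ 2 * N) := by
        refine add_le_add (by simpa using inv_anti₀ (by positivity) hS) (hw ?_)
        rwa [div_le_iff₀ hS0, one_div_mul_eq_div]
  · rw [neg_mul, abs_neg, abs_of_nonneg (by positivity), mul_comm]
    exact hw (hwi i)
  · set w := 1 / σ i ^ 2 / (M / σ i ^ 2 + 1 / τ i ^ 2)
    have hMw : M * w ≤ 1 :=
      calc M * w ≤ M * (1 / (M + c ^ 2)) := mul_le_mul_of_nonneg_left (hwi i) hM.le
        _ ≤ 1 := by
          rw [mul_one_div, div_le_one (by positivity)]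
          linarith [sq_nonneg c]
    calc (M / σ i ^ 2 + 1 / τ i ^ 2)⁻¹ + M / T * (w * w)
        = (M / σ i ^ 2 + 1 / τ i ^ 2)⁻¹ + M * w * w * T⁻¹ := by ring
      _ ≤ u ^ 2 / M + u ^ 2 / (c ^ 2 * N) := by
        refine add_le_add ?_ (hw ((mul_le_of_le_one_left (by positivity) hMw).trans (hwi i)))
        simpa using one_div_precision_le (hσ i) (hτ i) hM (hu i)
end Model

theorem mle_covariance_orders_general
    (N M : ℕ) (hN : 1 ≤ N) (hM : 1 ≤ M)
    (σ τ : Fin N → ℝ) (hσ : ∀ i, 0 < σ i) (hτ : ∀ i, 0 < τ i)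
    (c₁ c₂ u : ℝ) (hc₁ : 0 < c₁)
    (hlow : ∀ i, c₁ ≤ σ i / τ i)
    (hu : ∀ i, σ i ≤ u)
    (Ω : Matrix (Fin N ⊕ Fin M) (Fin N ⊕ Fin M) ℝ)
    (hΩ1 : ∀ i i' : Fin N, Ω (Sum.inl i) (Sum.inl i')
      = if i = i' then (M : ℝ) / σ i ^ 2 + 1 / τ i ^ 2 else 0)
    (hΩ2 : ∀ j j' : Fin M, Ω (Sum.inr j) (Sum.inr j')
      = if j = j' then ∑ u', 1 / σ u' ^ 2 else 0)
    (hΩ3 : ∀ (i : Fin N) (j : Fin M), Ω (Sum.inl i) (Sum.inr j) = 1 / σ i ^ 2)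
    (hΩ4 : ∀ (j : Fin M) (i : Fin N), Ω (Sum.inr j) (Sum.inl i) = 1 / σ i ^ 2) :
    (∀ j, Ω⁻¹ (Sum.inr j) (Sum.inr j) ≤ u ^ 2 * (1 + c₁ ^ (-2 : ℤ)) / N) ∧
    (∀ (i : Fin N) (j : Fin M),
      |Ω⁻¹ (Sum.inl i) (Sum.inr j)| ≤ u ^ 2 * (1 + c₂ ^ 2) / (c₁ ^ 2 * N)) ∧
    (∀ i, Ω⁻¹ (Sum.inl i) (Sum.inl i)
      ≤ u ^ 2 * (1 / M + (1 + c₂ ^ 2) / (c₁ ^ 2 * N))) := by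
  have : Nonempty (Fin N) := ⟨⟨0, hN⟩⟩
  have : Nonempty (Fin M) := ⟨⟨0, hM⟩⟩
  have hΩ : Ω = fullPrecision σ τ := by
    ext (i | j) (i' | j') <;> simp [fullPrecision, one_apply, diagonal_apply, hΩ1, hΩ2, hΩ3, hΩ4]
  obtain ⟨hG, hBG, hB⟩ := fullPrecision_inv_le (κ := Fin M) hσ hτ hc₁
    (fun i => sq_mul_sq_le_of_le_div hc₁.le (hτ i) (hlow i))
    (fun i => pow_le_pow_left₀ (hσ i).le (hu i) 2)
  simp only [Fintype.card_fin, ← hΩ] at hG hBG hB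
  have hc₂ : u ^ 2 / (c₁ ^ 2 * N) ≤ u ^ 2 * (1 + c₂ ^ 2) / (c₁ ^ 2 * N) := by
    gcongr
    exact le_mul_of_one_le_right (sq_nonneg u) (by linarith [sq_nonneg c₂])
  refine ⟨fun j => (hG j).trans_eq ?_, fun i j => (hBG i j).trans hc₂, fun i => (hB i).trans ?_⟩
  · rw [_root_.zpow_neg, zpow_ofNat]
    field_simp
  · rw [mul_add, mul_one_div, ← mul_div_assoc]
    gcongr

/-- Quantitative asymptotic orders of the MLE covariance: under the uniform bounds
`0 < c₁ ≤ σ_i/τ_i ≤ c₂` and `σ_i ≤ u`, the entries of the inverse of the full-observation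
precision matrix satisfy `Var(Ĝ_j) ≤ u²(1 + c₁^{-2})/N`,
`|Cov(B̂_i, Ĝ_j)| ≤ u²(1 + c₂²)/(c₁² N)` and
`Var(B̂_i) ≤ u²(1/M + (1 + c₂²)/(c₁² N))`. -/
theorem mle_covariance_orders
    (N M : ℕ) (hN : 1 ≤ N) (hM : 1 ≤ M)
    (σ τ : Fin N → ℝ) (hσ : ∀ i, 0 < σ i) (hτ : ∀ i, 0 < τ i)
    (c₁ c₂ u : ℝ) (hc₁ : 0 < c₁)
    (hlow : ∀ i, c₁ ≤ σ i / τ i) (hhigh : ∀ i, σ i / τ i ≤ c₂)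
    (hu : ∀ i, σ i ≤ u)
    (Ω : Matrix (Fin N ⊕ Fin M) (Fin N ⊕ Fin M) ℝ)
    (hΩ1 : ∀ i i' : Fin N, Ω (Sum.inl i) (Sum.inl i')
      = if i = i' then (M : ℝ) / σ i ^ 2 + 1 / τ i ^ 2 else 0)
    (hΩ2 : ∀ j j' : Fin M, Ω (Sum.inr j) (Sum.inr j')
      = if j = j' then ∑ u', 1 / σ u' ^ 2 else 0)
    (hΩ3 : ∀ (i : Fin N) (j : Fin M), Ω (Sum.inl i) (Sum.inr j) = 1 / σ i ^ 2)
    (hΩ4 : ∀ (j : Fin M) (i : Fin N), Ω (Sum.inr j) (Sum.inl i) = 1 / σ i ^ 2) :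
    (∀ j, Ω⁻¹ (Sum.inr j) (Sum.inr j) ≤ u ^ 2 * (1 + c₁ ^ (-2 : ℤ)) / N) ∧
    (∀ (i : Fin N) (j : Fin M),
      |Ω⁻¹ (Sum.inl i) (Sum.inr j)| ≤ u ^ 2 * (1 + c₂ ^ 2) / (c₁ ^ 2 * N)) ∧
    (∀ i, Ω⁻¹ (Sum.inl i) (Sum.inl i)
      ≤ u ^ 2 * (1 / M + (1 + c₂ ^ 2) / (c₁ ^ 2 * N))) :=
  mle_covariance_orders_general N M hN hM σ τ hσ hτ c₁ c₂ u hc₁ hlow hu Ω hΩ1 hΩ2 hΩ3 hΩ4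
end

section
/- Condition number lower bound (near non-identifiability): let N, M ≥ 1, σ_i > 0, τ_i > 0, and let Ω be the (N+M)×(N+M) symmetric matrix with Ω_{i,i} = |J_i|σ_i^{-2} + τ_i^{-2} (1 ≤ i ≤ N), Ω_{N+j,N+j} = Σ_{i∈I_j} σ_i^{-2} (1 ≤ j ≤ M), Ω_{i,N+j} = Ω_{N+j,i} = σ_i^{-2} if j ∈ J_i and 0 otherwise, and all other entries zero. Suppose Ω is positive definite, with largest and smallest eigenvalues λ_max and λ_min. Then, taking u = (1_N, 1_M)ᵀ and v = (1_N, −1_M)ᵀ, one has uᵀΩu = Σ_{i=1}^N τ_i^{-2} + 4 Σ_{i=1}^N |J_i| σ_i^{-2}, vᵀΩv = Σ_{i=1}^N τ_i^{-2}, and consequently λ_max/λ_min ≥ 1 + 4 (Σ_{i=1}^N |J_i| σ_i^{-2}) / (Σ_{i=1}^N τ_i^{-2}). -/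
/-!
The quadratic form of Ω is `∑ᵢ Bᵢ² / τᵢ² + ∑ᵢ ∑_{j ∈ Jᵢ} (Bᵢ + Gⱼ)² / σᵢ²`, so on `(1, s)` it equals
`∑ τᵢ⁻² + (1 + s)² ∑ |Jᵢ| σᵢ⁻²`: the observation terms vanish along `v = (1, -1)` and are
largest along `u = (1, 1)`. Since `u` and `v` have the same length, the Rayleigh bounds
`λ_min |x|² ≤ xᵀΩx ≤ λ_max |x|²` give `uᵀΩu / vᵀΩv ≤ λ_max / λ_min`.
-/

open Matrix

section PrecisionMatrix

variable {ι κ : Type*} [Fintype ι] [Fintype κ] [DecidableEq κ]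

theorem Finset.sum_comm_ite_mem {β : Type*} [AddCommMonoid β] {J : ι → Finset κ}
    (f : ι → κ → β) :
    ∑ j, ∑ i, (if j ∈ J i then f i j else 0) = ∑ i, ∑ j ∈ J i, f i j := by
  rw [Finset.sum_comm]
  simp only [Finset.sum_ite_mem, Finset.univ_inter]

variable [DecidableEq ι] {σ τ : ι → ℝ} {J : ι → Finset κ}
  {Ω : Matrix (ι ⊕ κ) (ι ⊕ κ) ℝ}

theorem sum_elim_dotProduct_mulVec_sum_elim
    (hΩ1 : ∀ i i' : ι, Ω (Sum.inl i) (Sum.inl i')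
      = if i = i' then ((J i).card : ℝ) / σ i ^ 2 + 1 / τ i ^ 2 else 0)
    (hΩ2 : ∀ j j' : κ, Ω (Sum.inr j) (Sum.inr j')
      = if j = j' then ∑ i ∈ Finset.univ.filter (fun i => j ∈ J i), 1 / σ i ^ 2 else 0)
    (hΩ3 : ∀ (i : ι) (j : κ),
      Ω (Sum.inl i) (Sum.inr j) = if j ∈ J i then 1 / σ i ^ 2 else 0)
    (hΩ4 : ∀ (j : κ) (i : ι),
      Ω (Sum.inr j) (Sum.inl i) = if j ∈ J i then 1 / σ i ^ 2 else 0)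
    (a : ι → ℝ) (b : κ → ℝ) :
    Sum.elim a b ⬝ᵥ Ω *ᵥ Sum.elim a b
      = ∑ i, a i ^ 2 / τ i ^ 2 + ∑ i, ∑ j ∈ J i, (a i + b j) ^ 2 / σ i ^ 2 := by
  have hdiag : ∀ i, a i * (((J i).card / σ i ^ 2 + 1 / τ i ^ 2) * a i)
      = a i ^ 2 / τ i ^ 2 + ∑ _j ∈ J i, a i ^ 2 / σ i ^ 2 := by
    intro i
    rw [Finset.sum_const, nsmul_eq_mul]
    ring
  have hsq : ∀ i j, (a i + b j) ^ 2 / σ i ^ 2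
      = a i ^ 2 / σ i ^ 2 + b j * (1 / σ i ^ 2 * a i) + a i * (1 / σ i ^ 2 * b j)
        + b j * (1 / σ i ^ 2 * b j) := by
    intro i j
    ring
  simp only [dotProduct, mulVec, Fintype.sum_sum_type, Sum.elim_inl, Sum.elim_inr, hΩ1, hΩ2,
    hΩ3, hΩ4, ite_mul, zero_mul, Finset.sum_ite_eq, Finset.mem_univ, if_true, Finset.sum_filter,
    mul_add, Finset.mul_sum, Finset.sum_mul, mul_ite, mul_zero, Finset.sum_add_distrib,
    Finset.sum_comm_ite_mem, Finset.sum_ite_mem, Finset.univ_inter, hdiag, hsq]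
  ring

end PrecisionMatrix

namespace Matrix

variable {n : Type*} [Fintype n] [DecidableEq n] {A : Matrix n n ℝ}

theorem IsHermitian.mul_dotProduct_self_le_dotProduct_mulVec (hA : A.IsHermitian) {a : ℝ}
    (ha : ∀ μ ∈ spectrum ℝ A, a ≤ μ) (x : n → ℝ) : a * (x ⬝ᵥ x) ≤ x ⬝ᵥ A *ᵥ x := by
  have hPSD : (A - algebraMap ℝ _ a).PosSemidef := by
    refine posSemidef_iff_isHermitian_and_spectrum_nonneg.2 ⟨?_, ?_⟩
    · rw [Algebra.algebraMap_eq_smul_one]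
      exact hA.sub (isHermitian_one.smul (IsSelfAdjoint.all a))
    · rw [← spectrum.sub_singleton_eq]
      rintro _ ⟨μ, hμ, _, rfl, rfl⟩
      simpa using ha μ hμ
  simpa [Algebra.algebraMap_eq_smul_one, sub_mulVec, smul_mulVec, sub_nonneg] using
    hPSD.dotProduct_mulVec_nonneg x

theorem IsHermitian.dotProduct_mulVec_le_mul_dotProduct_self (hA : A.IsHermitian) {b : ℝ}
    (hb : ∀ μ ∈ spectrum ℝ A, μ ≤ b) (x : n → ℝ) : x ⬝ᵥ A *ᵥ x ≤ b * (x ⬝ᵥ x) := by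
  have := hA.neg.mul_dotProduct_self_le_dotProduct_mulVec (a := -b) (x := x) <| by
    rw [← spectrum.neg_eq]
    intro μ hμ
    simpa using neg_le_neg (hb (-μ) (Set.mem_neg.1 hμ))
  simpa [neg_mulVec] using this

theorem IsHermitian.dotProduct_mulVec_div_le_div (hA : A.IsHermitian) {a b : ℝ}
    (ha : ∀ μ ∈ spectrum ℝ A, a ≤ μ) (hb : ∀ μ ∈ spectrum ℝ A, μ ≤ b) (ha₀ : 0 < a)
    {x y : n → ℝ} (hy : y ≠ 0) (hxy : x ⬝ᵥ x = y ⬝ᵥ y) :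
    (x ⬝ᵥ A *ᵥ x) / (y ⬝ᵥ A *ᵥ y) ≤ b / a := by
  have hyy : 0 < y ⬝ᵥ y := by simpa using dotProduct_star_self_pos_iff.2 hy
  have hx_le := hA.dotProduct_mulVec_le_mul_dotProduct_self hb x
  have hx_ge := hA.mul_dotProduct_self_le_dotProduct_mulVec ha x
  have hy_ge := hA.mul_dotProduct_self_le_dotProduct_mulVec ha y
  rw [hxy] at hx_le hx_ge
  calc (x ⬝ᵥ A *ᵥ x) / (y ⬝ᵥ A *ᵥ y) ≤ (b * (y ⬝ᵥ y)) / (a * (y ⬝ᵥ y)) :=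
        div_le_div₀ (by nlinarith) hx_le (by positivity) hy_ge
    _ = b / a := mul_div_mul_right b a hyy.ne'

theorem PosDef.pos_of_mem_spectrum (hA : A.PosDef) {μ : ℝ} (hμ : μ ∈ spectrum ℝ A) : 0 < μ := by
  obtain ⟨i, rfl⟩ := hA.isHermitian.spectrum_real_eq_range_eigenvalues ▸ hμ
  exact hA.eigenvalues_pos i

end Matrix

theorem condition_number_lower_bound_general
    (N M : ℕ) (hN : 1 ≤ N)
    (σ τ : Fin N → ℝ)
    (J : Fin N → Finset (Fin M))
    (Ω : Matrix (Fin N ⊕ Fin M) (Fin N ⊕ Fin M) ℝ)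
    (hΩ1 : ∀ i i' : Fin N, Ω (Sum.inl i) (Sum.inl i')
      = if i = i' then ((J i).card : ℝ) / σ i ^ 2 + 1 / τ i ^ 2 else 0)
    (hΩ2 : ∀ j j' : Fin M, Ω (Sum.inr j) (Sum.inr j')
      = if j = j' then ∑ i ∈ Finset.univ.filter (fun i => j ∈ J i), 1 / σ i ^ 2 else 0)
    (hΩ3 : ∀ (i : Fin N) (j : Fin M),
      Ω (Sum.inl i) (Sum.inr j) = if j ∈ J i then 1 / σ i ^ 2 else 0)
    (hΩ4 : ∀ (j : Fin M) (i : Fin N),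
      Ω (Sum.inr j) (Sum.inl i) = if j ∈ J i then 1 / σ i ^ 2 else 0)
    (hPD : Ω.PosDef)
    (lmax lmin : ℝ)
    (hmax : lmax ∈ spectrum ℝ Ω ∧ ∀ μ ∈ spectrum ℝ Ω, μ ≤ lmax)
    (hmin : lmin ∈ spectrum ℝ Ω ∧ ∀ μ ∈ spectrum ℝ Ω, lmin ≤ μ)
    (u v : (Fin N ⊕ Fin M) → ℝ)
    (hu : u = Sum.elim (fun _ => 1) (fun _ => 1))
    (hv : v = Sum.elim (fun _ => 1) (fun _ => -1)) :
    u ⬝ᵥ Ω.mulVec u = (∑ i, 1 / τ i ^ 2) + 4 * ∑ i, ((J i).card : ℝ) / σ i ^ 2 ∧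
    v ⬝ᵥ Ω.mulVec v = ∑ i, 1 / τ i ^ 2 ∧
    1 + 4 * (∑ i, ((J i).card : ℝ) / σ i ^ 2) / (∑ i, 1 / τ i ^ 2) ≤ lmax / lmin := by
  have hform := sum_elim_dotProduct_mulVec_sum_elim hΩ1 hΩ2 hΩ3 hΩ4
  have hQu : u ⬝ᵥ Ω *ᵥ u = (∑ i, 1 / τ i ^ 2) + 4 * ∑ i, ((J i).card : ℝ) / σ i ^ 2 := by
    subst hu
    rw [hform, Finset.mul_sum]
    norm_num
    exact Finset.sum_congr rfl fun i _ => by ring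
  have hQv : v ⬝ᵥ Ω *ᵥ v = ∑ i, 1 / τ i ^ 2 := by
    subst hv
    simp [hform]
  have hv₀ : v ≠ 0 := fun h => by simpa [hv] using congrFun h (Sum.inl ⟨0, hN⟩)
  have hT : 0 < ∑ i, 1 / τ i ^ 2 := hQv ▸ by simpa using hPD.dotProduct_mulVec_pos hv₀
  have hlmin : 0 < lmin := hPD.pos_of_mem_spectrum hmin.1
  have hratio := hPD.isHermitian.dotProduct_mulVec_div_le_div hmin.2 hmax.2 hlmin hv₀
    (x := u) (by simp [hu, hv, dotProduct, Fintype.sum_sum_type])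
  refine ⟨hQu, hQv, ?_⟩
  rwa [hQu, hQv, add_div, div_self hT.ne'] at hratio

/-- Condition number lower bound (near non-identifiability): for the precision matrix `Ω`
of `(B, G)`, with `u = (1_N, 1_M)ᵀ` and `v = (1_N, -1_M)ᵀ`, one has
`uᵀΩu = Σ τ_i^{-2} + 4 Σ |J_i| σ_i^{-2}`, `vᵀΩv = Σ τ_i^{-2}`, and hence the condition
number satisfies `λ_max/λ_min ≥ 1 + 4 (Σ |J_i| σ_i^{-2})/(Σ τ_i^{-2})`. -/
theorem condition_number_lower_bound
    (N M : ℕ) (hN : 1 ≤ N) (hM : 1 ≤ M)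
    (σ τ : Fin N → ℝ) (hσ : ∀ i, 0 < σ i) (hτ : ∀ i, 0 < τ i)
    (J : Fin N → Finset (Fin M))
    (Ω : Matrix (Fin N ⊕ Fin M) (Fin N ⊕ Fin M) ℝ)
    (hΩ1 : ∀ i i' : Fin N, Ω (Sum.inl i) (Sum.inl i')
      = if i = i' then ((J i).card : ℝ) / σ i ^ 2 + 1 / τ i ^ 2 else 0)
    (hΩ2 : ∀ j j' : Fin M, Ω (Sum.inr j) (Sum.inr j')
      = if j = j' then ∑ i ∈ Finset.univ.filter (fun i => j ∈ J i), 1 / σ i ^ 2 else 0)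
    (hΩ3 : ∀ (i : Fin N) (j : Fin M),
      Ω (Sum.inl i) (Sum.inr j) = if j ∈ J i then 1 / σ i ^ 2 else 0)
    (hΩ4 : ∀ (j : Fin M) (i : Fin N),
      Ω (Sum.inr j) (Sum.inl i) = if j ∈ J i then 1 / σ i ^ 2 else 0)
    (hPD : Ω.PosDef)
    (lmax lmin : ℝ)
    (hmax : lmax ∈ spectrum ℝ Ω ∧ ∀ μ ∈ spectrum ℝ Ω, μ ≤ lmax)
    (hmin : lmin ∈ spectrum ℝ Ω ∧ ∀ μ ∈ spectrum ℝ Ω, lmin ≤ μ)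
    (u v : (Fin N ⊕ Fin M) → ℝ)
    (hu : u = Sum.elim (fun _ => 1) (fun _ => 1))
    (hv : v = Sum.elim (fun _ => 1) (fun _ => -1)) :
    u ⬝ᵥ Ω.mulVec u = (∑ i, 1 / τ i ^ 2) + 4 * ∑ i, ((J i).card : ℝ) / σ i ^ 2 ∧
    v ⬝ᵥ Ω.mulVec v = ∑ i, 1 / τ i ^ 2 ∧
    1 + 4 * (∑ i, ((J i).card : ℝ) / σ i ^ 2) / (∑ i, 1 / τ i ^ 2) ≤ lmax / lmin :=
  condition_number_lower_bound_general N M hN σ τ J Ω hΩ1 hΩ2 hΩ3 hΩ4 hPD lmax lmin hmax hmin u v hu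
    hv
end

section
/- Closed form of the marginal posterior of the variances: with γ and Ω as defined from the data and σ² (as in the quadratic expansion of the log posterior), suppose Ω is positive definite. Then ∫_{ℝ^{N+M}} p(B, G, σ²) d(B, G) = (2π)^{(N+M)/2} det(Ω)^{-1/2} · [∏_{i=1}^N σ_i^{−|J_i|−2−2α}] · exp{ (1/2) γᵀ Ω^{-1} γ − Σ_{i=1}^N [ (Σ_{j∈J_i} y_{ij}² + 2β)/(2σ_i²) + |J_i|σ_i²/8 + (1/2)Σ_{j∈J_i} y_{ij} + b_i²/(2τ_i²) ] }. In particular, the marginal posterior density of σ² is proportional (up to a constant free of σ²) to [∏ σ_i^{−|J_i|−2−2α}] det(Ω)^{-1/2} exp{ (1/2) μᵀΩμ − Σ_i [ (Σ_{j∈J_i} y_{ij}² + 2β)/(2σ_i²) + |J_i|σ_i²/8 ] } with μ = Ω^{-1}γ. -/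
/-!
As a function of `θ = (B, G)` the log posterior is the quadratic `-(1/2) θᵀΩθ + γᵀθ - C`:
expanding each residual square `(y_{ij} + σ_i²/2 - B_i - G_j)²` produces the `(i, j)` edge
contributions to `Ω` and `γ`, and leaves the constant `C`. Completing the square at `Ω⁻¹γ`
and substituting `θ ↦ Ω^{1/2} θ` reduces the integral to a product of one-dimensional
Gaussian integrals, at the cost of the Jacobian `det(Ω^{1/2})⁻¹ = det(Ω)^{-1/2}`.
-/

open Matrix MeasureTheory

open scoped MatrixOrder

section Gaussian

variable {n : Type*} [Fintype n]

theorem Matrix.integral_comp_mulVec [DecidableEq n] {E : Type*} [NormedAddCommGroup E]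
    [NormedSpace ℝ E] {S : Matrix n n ℝ} (hS : S.det ≠ 0) (f : (n → ℝ) → E) :
    ∫ x, f (S *ᵥ x) = |S.det|⁻¹ • ∫ y, f y := by
  have : Invertible S := S.invertibleOfIsUnitDet hS.isUnit
  have hemb : MeasurableEmbedding (toLin' S) :=
    (toLinearEquiv' S this).toContinuousLinearEquiv.toHomeomorph.measurableEmbedding
  simp_rw [← toLin'_apply]
  rw [← hemb.integral_map, Real.map_matrix_volume_pi_eq_smul_volume_pi hS,
    integral_smul_measure, ENNReal.toReal_ofReal (by positivity), abs_inv]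

theorem integral_exp_neg_half_dotProduct_self :
    ∫ x : n → ℝ, Real.exp (-(1/2) * (x ⬝ᵥ x))
      = (2 * Real.pi) ^ ((Fintype.card n : ℝ) / 2) := by
  have hprod (x : n → ℝ) :
      Real.exp (-(1/2) * (x ⬝ᵥ x)) = ∏ i, Real.exp (-(1/2) * x i ^ 2) := by
    simp only [dotProduct, Finset.mul_sum, ← Real.exp_sum, sq]
  simp_rw [hprod]
  rw [integral_fintype_prod_volume_eq_pow (fun t : ℝ => Real.exp (-(1/2) * t ^ 2)),
    integral_gaussian, ← Real.rpow_natCast, Real.sqrt_eq_rpow, ← Real.rpow_mul (by positivity)]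
  congr 1 <;> ring

theorem Matrix.PosDef.integral_exp_neg_half_dotProduct_mulVec [DecidableEq n]
    {Ω : Matrix n n ℝ} (hΩ : Ω.PosDef) :
    ∫ x, Real.exp (-(1/2) * (x ⬝ᵥ Ω *ᵥ x))
      = (2 * Real.pi) ^ ((Fintype.card n : ℝ) / 2) * Ω.det ^ (-(1/2) : ℝ) := by
  set S := CFC.sqrt Ω
  have hSS : S * S = Ω := CFC.sqrt_mul_sqrt_self Ω hΩ.posSemidef.nonneg
  have hST : Sᵀ = S := (isHermitian_iff_isSymm.1 (CFC.sqrt_nonneg Ω).posSemidef.isHermitian).eq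
  have hdet : S.det = √Ω.det := by rw [hΩ.posSemidef.det_sqrt, RCLike.sqrt_real]
  have hquad (x : n → ℝ) : x ⬝ᵥ Ω *ᵥ x = S *ᵥ x ⬝ᵥ S *ᵥ x := by
    rw [← hSS, ← mulVec_mulVec, dotProduct_mulVec, ← mulVec_transpose, hST]
  simp_rw [hquad]
  rw [integral_comp_mulVec (hdet ▸ (Real.sqrt_pos.2 hΩ.det_pos).ne')
      (fun y => Real.exp (-(1/2) * (y ⬝ᵥ y))), integral_exp_neg_half_dotProduct_self, hdet,
    abs_of_nonneg (Real.sqrt_nonneg _), Real.sqrt_eq_rpow, ← Real.rpow_neg hΩ.det_pos.le,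
    smul_eq_mul, mul_comm]

theorem Matrix.PosDef.integral_exp_neg_half_dotProduct_mulVec_add_dotProduct [DecidableEq n]
    {Ω : Matrix n n ℝ} (hΩ : Ω.PosDef) (v : n → ℝ) :
    ∫ x, Real.exp (-(1/2) * (x ⬝ᵥ Ω *ᵥ x) + v ⬝ᵥ x)
      = (2 * Real.pi) ^ ((Fintype.card n : ℝ) / 2) * Ω.det ^ (-(1/2) : ℝ)
        * Real.exp ((1/2) * v ⬝ᵥ Ω⁻¹ *ᵥ v) := by
  set μ := Ω⁻¹ *ᵥ v
  have hμ : Ω *ᵥ μ = v := by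
    rw [mulVec_mulVec, mul_nonsing_inv _ (isUnit_iff_ne_zero.2 hΩ.det_pos.ne'), one_mulVec]
  have hsymm (x : n → ℝ) : μ ⬝ᵥ Ω *ᵥ x = x ⬝ᵥ Ω *ᵥ μ := by
    rw [dotProduct_mulVec, ← mulVec_transpose, (isHermitian_iff_isSymm.1 hΩ.isHermitian).eq,
      dotProduct_comm]
  have hsquare (x : n → ℝ) : -(1/2) * (x ⬝ᵥ Ω *ᵥ x) + v ⬝ᵥ x
      = -(1/2) * ((x - μ) ⬝ᵥ Ω *ᵥ (x - μ)) + (1/2) * v ⬝ᵥ μ := by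
    simp only [mulVec_sub, dotProduct_sub, sub_dotProduct, hsymm, hμ, dotProduct_comm v]
    ring
  simp_rw [hsquare, Real.exp_add, integral_mul_const]
  rw [integral_sub_right_eq_self (fun x => Real.exp (-(1/2) * (x ⬝ᵥ Ω *ᵥ x))) μ,
    hΩ.integral_exp_neg_half_dotProduct_mulVec]

end Gaussian

theorem integral_prod_eq_integral_sum_elim {ι κ E : Type*} [Fintype ι] [Fintype κ]
    [NormedAddCommGroup E] [NormedSpace ℝ E] (f : (ι → ℝ) → (κ → ℝ) → E) :
    ∫ θ : (ι → ℝ) × (κ → ℝ), f θ.1 θ.2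
      = ∫ x : ι ⊕ κ → ℝ, f (x ∘ Sum.inl) (x ∘ Sum.inr) :=
  (volume_measurePreserving_sumPiEquivProdPi_symm fun _ : ι ⊕ κ => ℝ).integral_comp
    (MeasurableEquiv.sumPiEquivProdPi _).symm.measurableEmbedding
    fun x => f (x ∘ Sum.inl) (x ∘ Sum.inr)

theorem Finset.sum_filter_mem_comm {ι κ R : Type*} [Fintype ι] [Fintype κ] [DecidableEq κ]
    [AddCommMonoid R] (J : ι → Finset κ) (f : ι → κ → R) :
    ∑ j, ∑ i with j ∈ J i, f i j = ∑ i, ∑ j ∈ J i, f i j :=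
  Finset.sum_comm' (by simp)

section Posterior

variable {N M : ℕ} (J : Fin N → Finset (Fin M)) (σ τ : Fin N → ℝ)

theorem sum_elim_dotProduct_mulVec_sum_elim_eq
    {Ω : Matrix (Fin N ⊕ Fin M) (Fin N ⊕ Fin M) ℝ}
    (hΩ1 : ∀ i i' : Fin N, Ω (Sum.inl i) (Sum.inl i')
      = if i = i' then ((J i).card : ℝ) / σ i ^ 2 + 1 / τ i ^ 2 else 0)
    (hΩ2 : ∀ j j' : Fin M, Ω (Sum.inr j) (Sum.inr j')
      = if j = j' then ∑ i with j ∈ J i, 1 / σ i ^ 2 else 0)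
    (hΩ3 : ∀ i j, Ω (Sum.inl i) (Sum.inr j) = if j ∈ J i then 1 / σ i ^ 2 else 0)
    (hΩ4 : ∀ j i, Ω (Sum.inr j) (Sum.inl i) = if j ∈ J i then 1 / σ i ^ 2 else 0)
    (B : Fin N → ℝ) (G : Fin M → ℝ) :
    Sum.elim B G ⬝ᵥ Ω *ᵥ Sum.elim B G
      = ∑ i, (B i ^ 2 / τ i ^ 2 + ∑ j ∈ J i, (B i + G j) ^ 2 / σ i ^ 2) := by
  have hB (i : Fin N) :
      B i * (∑ i', Ω (.inl i) (.inl i') * B i' + ∑ j, Ω (.inl i) (.inr j) * G j)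
        = B i ^ 2 / τ i ^ 2 + ∑ j ∈ J i, B i * (B i + G j) / σ i ^ 2 := by
    have hsplit (j : Fin M) :
        B i * (B i + G j) / σ i ^ 2 = B i ^ 2 / σ i ^ 2 + B i * (1 / σ i ^ 2 * G j) := by
      ring
    simp only [hΩ1, hΩ3, ite_mul, zero_mul, Finset.sum_ite_eq, Finset.mem_univ, if_true,
      ← Finset.sum_filter, Finset.filter_univ_mem, hsplit, Finset.sum_add_distrib,
      Finset.sum_const, nsmul_eq_mul, ← Finset.mul_sum]
    ring
  have hG (j : Fin M) :
      G j * (∑ i, Ω (.inr j) (.inl i) * B i + ∑ j', Ω (.inr j) (.inr j') * G j')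
        = ∑ i with j ∈ J i, G j * (B i + G j) / σ i ^ 2 := by
    simp only [hΩ2, hΩ4, ite_mul, zero_mul, Finset.sum_ite_eq, Finset.mem_univ, if_true,
      ← Finset.sum_filter, Finset.sum_mul, Finset.mul_sum, ← Finset.sum_add_distrib]
    exact Finset.sum_congr rfl fun i _ => by ring
  simp only [dotProduct, mulVec, Fintype.sum_sum_type, Sum.elim_inl, Sum.elim_inr, hB, hG,
    Finset.sum_filter_mem_comm, ← Finset.sum_add_distrib]
  refine Finset.sum_congr rfl fun i _ => ?_
  rw [add_assoc, ← Finset.sum_add_distrib]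
  exact congrArg _ (Finset.sum_congr rfl fun j _ => by ring)

theorem dotProduct_sum_elim_eq (y : Fin N → Fin M → ℝ) (b : Fin N → ℝ)
    {γ : Fin N ⊕ Fin M → ℝ}
    (hγ1 : ∀ i, γ (Sum.inl i)
      = (∑ j ∈ J i, y i j / σ i ^ 2) + b i / τ i ^ 2 + ((J i).card : ℝ) / 2)
    (hγ2 : ∀ j, γ (Sum.inr j)
      = (∑ i with j ∈ J i, y i j / σ i ^ 2)
        + ((Finset.univ.filter fun i => j ∈ J i).card : ℝ) / 2)
    (B : Fin N → ℝ) (G : Fin M → ℝ) :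
    γ ⬝ᵥ Sum.elim B G
      = ∑ i, (b i / τ i ^ 2 * B i + ∑ j ∈ J i, (y i j / σ i ^ 2 + 1/2) * (B i + G j)) := by
  have hB (i : Fin N) : γ (.inl i) * B i
      = b i / τ i ^ 2 * B i + ∑ j ∈ J i, (y i j / σ i ^ 2 + 1/2) * B i := by
    rw [hγ1, ← Finset.sum_mul, Finset.sum_add_distrib, Finset.sum_const, nsmul_eq_mul]
    ring
  have hG (j : Fin M) :
      γ (.inr j) * G j = ∑ i with j ∈ J i, (y i j / σ i ^ 2 + 1/2) * G j := by
    rw [hγ2, ← Finset.sum_mul, Finset.sum_add_distrib, Finset.sum_const, nsmul_eq_mul]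
    ring
  simp only [dotProduct, Fintype.sum_sum_type, Sum.elim_inl, Sum.elim_inr, hB, hG,
    Finset.sum_filter_mem_comm, ← Finset.sum_add_distrib]
  refine Finset.sum_congr rfl fun i _ => ?_
  rw [add_assoc, ← Finset.sum_add_distrib]
  exact congrArg _ (Finset.sum_congr rfl fun j _ => by ring)

end Posterior

theorem neg_half_mul_residual_sq_div {s : ℝ} (hs : s ≠ 0) (y u : ℝ) :
    -(1/2) * ((y + s ^ 2 / 2 - u) ^ 2 / s ^ 2)
      = -(1/2) * (u ^ 2 / s ^ 2) + (y / s ^ 2 + 1/2) * u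
        - (y ^ 2 / (2 * s ^ 2) + s ^ 2 / 8 + y / 2) := by
  field_simp
  ring

theorem posterior_exponent_summand_eq {κ : Type*} (t : Finset κ) (y g : κ → ℝ)
    {σ : ℝ} (hσ : σ ≠ 0) (b u τ β : ℝ) :
    -(1/2) * ∑ j ∈ t, (y j + σ ^ 2 / 2 - u - g j) ^ 2 / σ ^ 2
        - ((b - u) ^ 2 / (2 * τ ^ 2) + β / σ ^ 2)
      = -(1/2) * (u ^ 2 / τ ^ 2 + ∑ j ∈ t, (u + g j) ^ 2 / σ ^ 2)
        + (b / τ ^ 2 * u + ∑ j ∈ t, (y j / σ ^ 2 + 1/2) * (u + g j))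
        - (((∑ j ∈ t, y j ^ 2) + 2 * β) / (2 * σ ^ 2) + (t.card : ℝ) * σ ^ 2 / 8
          + (1/2) * ∑ j ∈ t, y j + b ^ 2 / (2 * τ ^ 2)) := by
  classical
  induction t using Finset.induction with
  | empty =>
    simp only [Finset.sum_empty, Finset.card_empty, Nat.cast_zero]
    ring
  | @insert a t ha ih =>
    simp only [Finset.sum_insert ha, Finset.card_insert_of_notMem ha]
    push_cast
    linear_combination ih + neg_half_mul_residual_sq_div hσ (y a) (u + g a)

theorem marginal_posterior_closed_form_general
    (N M : ℕ)
    (J : Fin N → Finset (Fin M))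
    (y : Fin N → Fin M → ℝ) (b : Fin N → ℝ)
    (σ τ : Fin N → ℝ) (hσ : ∀ i, 0 < σ i)
    (α β : ℝ)
    (p : (Fin N → ℝ) → (Fin M → ℝ) → ℝ)
    (hp : ∀ (B : Fin N → ℝ) (G : Fin M → ℝ),
      p B G = (∏ i, σ i ^ (-((J i).card : ℝ) - 2 - 2 * α)) *
        Real.exp (-(1/2) * ∑ i, ∑ j ∈ J i, (y i j + σ i ^ 2 / 2 - B i - G j) ^ 2 / σ i ^ 2
          - ∑ i, ((b i - B i) ^ 2 / (2 * τ i ^ 2) + β / σ i ^ 2)))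
    (γ : (Fin N ⊕ Fin M) → ℝ)
    (hγ1 : ∀ i, γ (Sum.inl i)
      = (∑ j ∈ J i, y i j / σ i ^ 2) + b i / τ i ^ 2 + ((J i).card : ℝ) / 2)
    (hγ2 : ∀ j, γ (Sum.inr j)
      = (∑ i ∈ Finset.univ.filter (fun i => j ∈ J i), y i j / σ i ^ 2)
        + ((Finset.univ.filter (fun i => j ∈ J i)).card : ℝ) / 2)
    (Ω : Matrix (Fin N ⊕ Fin M) (Fin N ⊕ Fin M) ℝ)
    (hΩ1 : ∀ i i' : Fin N, Ω (Sum.inl i) (Sum.inl i')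
      = if i = i' then ((J i).card : ℝ) / σ i ^ 2 + 1 / τ i ^ 2 else 0)
    (hΩ2 : ∀ j j' : Fin M, Ω (Sum.inr j) (Sum.inr j')
      = if j = j' then ∑ i ∈ Finset.univ.filter (fun i => j ∈ J i), 1 / σ i ^ 2 else 0)
    (hΩ3 : ∀ (i : Fin N) (j : Fin M),
      Ω (Sum.inl i) (Sum.inr j) = if j ∈ J i then 1 / σ i ^ 2 else 0)
    (hΩ4 : ∀ (j : Fin M) (i : Fin N),
      Ω (Sum.inr j) (Sum.inl i) = if j ∈ J i then 1 / σ i ^ 2 else 0)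
    (hPD : Ω.PosDef) :
    ∫ θ : (Fin N → ℝ) × (Fin M → ℝ), p θ.1 θ.2
      = (2 * Real.pi) ^ (((N : ℝ) + M) / 2) * Ω.det ^ (-(1/2) : ℝ)
        * (∏ i, σ i ^ (-((J i).card : ℝ) - 2 - 2 * α))
        * Real.exp ((1/2) * γ ⬝ᵥ (Ω⁻¹).mulVec γ
            - ∑ i, (((∑ j ∈ J i, (y i j) ^ 2) + 2 * β) / (2 * σ i ^ 2)
              + ((J i).card : ℝ) * σ i ^ 2 / 8
              + (1/2) * ∑ j ∈ J i, y i j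
              + (b i) ^ 2 / (2 * τ i ^ 2))) := by
  set K := ∏ i, σ i ^ (-((J i).card : ℝ) - 2 - 2 * α)
  set C := ∑ i, (((∑ j ∈ J i, (y i j) ^ 2) + 2 * β) / (2 * σ i ^ 2)
    + ((J i).card : ℝ) * σ i ^ 2 / 8 + (1/2) * ∑ j ∈ J i, y i j + (b i) ^ 2 / (2 * τ i ^ 2))
  have hintegrand (B : Fin N → ℝ) (G : Fin M → ℝ) : p B G = K *
      (Real.exp (-(1/2) * (Sum.elim B G ⬝ᵥ Ω *ᵥ Sum.elim B G) + γ ⬝ᵥ Sum.elim B G)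
        / Real.exp C) := by
    rw [hp, ← Real.exp_sub, sum_elim_dotProduct_mulVec_sum_elim_eq J σ τ hΩ1 hΩ2 hΩ3 hΩ4,
      dotProduct_sum_elim_eq J σ τ y b hγ1 hγ2, Finset.mul_sum, Finset.mul_sum,
      ← Finset.sum_sub_distrib, ← Finset.sum_add_distrib, ← Finset.sum_sub_distrib]
    exact congrArg _ (congrArg _ (Finset.sum_congr rfl fun i _ =>
      posterior_exponent_summand_eq (J i) (y i) G (hσ i).ne' (b i) (B i) (τ i) β))
  simp_rw [integral_prod_eq_integral_sum_elim, hintegrand, Sum.elim_comp_inl_inr,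
    integral_const_mul, integral_div, hPD.integral_exp_neg_half_dotProduct_mulVec_add_dotProduct,
    Real.exp_sub, Fintype.card_sum, Fintype.card_fin, Nat.cast_add]
  ring

/-- Closed form of the marginal posterior of the variances: integrating the unnormalized
posterior over `(B, G)` gives
`(2π)^{(N+M)/2} det(Ω)^{-1/2} [∏ σ_i^{-|J_i|-2-2α}] exp{(1/2)γᵀΩ⁻¹γ - Σ_i [...]}`. -/
theorem marginal_posterior_closed_form
    (N M : ℕ) (hN : 1 ≤ N) (hM : 1 ≤ M)
    (J : Fin N → Finset (Fin M))
    (y : Fin N → Fin M → ℝ) (b : Fin N → ℝ)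
    (σ τ : Fin N → ℝ) (hσ : ∀ i, 0 < σ i) (hτ : ∀ i, 0 < τ i)
    (α β : ℝ) (hα : 0 < α) (hβ : 0 < β)
    (p : (Fin N → ℝ) → (Fin M → ℝ) → ℝ)
    (hp : ∀ (B : Fin N → ℝ) (G : Fin M → ℝ),
      p B G = (∏ i, σ i ^ (-((J i).card : ℝ) - 2 - 2 * α)) *
        Real.exp (-(1/2) * ∑ i, ∑ j ∈ J i, (y i j + σ i ^ 2 / 2 - B i - G j) ^ 2 / σ i ^ 2
          - ∑ i, ((b i - B i) ^ 2 / (2 * τ i ^ 2) + β / σ i ^ 2)))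
    (γ : (Fin N ⊕ Fin M) → ℝ)
    (hγ1 : ∀ i, γ (Sum.inl i)
      = (∑ j ∈ J i, y i j / σ i ^ 2) + b i / τ i ^ 2 + ((J i).card : ℝ) / 2)
    (hγ2 : ∀ j, γ (Sum.inr j)
      = (∑ i ∈ Finset.univ.filter (fun i => j ∈ J i), y i j / σ i ^ 2)
        + ((Finset.univ.filter (fun i => j ∈ J i)).card : ℝ) / 2)
    (Ω : Matrix (Fin N ⊕ Fin M) (Fin N ⊕ Fin M) ℝ)
    (hΩ1 : ∀ i i' : Fin N, Ω (Sum.inl i) (Sum.inl i')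
      = if i = i' then ((J i).card : ℝ) / σ i ^ 2 + 1 / τ i ^ 2 else 0)
    (hΩ2 : ∀ j j' : Fin M, Ω (Sum.inr j) (Sum.inr j')
      = if j = j' then ∑ i ∈ Finset.univ.filter (fun i => j ∈ J i), 1 / σ i ^ 2 else 0)
    (hΩ3 : ∀ (i : Fin N) (j : Fin M),
      Ω (Sum.inl i) (Sum.inr j) = if j ∈ J i then 1 / σ i ^ 2 else 0)
    (hΩ4 : ∀ (j : Fin M) (i : Fin N),
      Ω (Sum.inr j) (Sum.inl i) = if j ∈ J i then 1 / σ i ^ 2 else 0)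
    (hPD : Ω.PosDef) :
    ∫ θ : (Fin N → ℝ) × (Fin M → ℝ), p θ.1 θ.2
      = (2 * Real.pi) ^ (((N : ℝ) + M) / 2) * Ω.det ^ (-(1/2) : ℝ)
        * (∏ i, σ i ^ (-((J i).card : ℝ) - 2 - 2 * α))
        * Real.exp ((1/2) * γ ⬝ᵥ (Ω⁻¹).mulVec γ
            - ∑ i, (((∑ j ∈ J i, (y i j) ^ 2) + 2 * β) / (2 * σ i ^ 2)
              + ((J i).card : ℝ) * σ i ^ 2 / 8
              + (1/2) * ∑ j ∈ J i, y i j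
              + (b i) ^ 2 / (2 * τ i ^ 2))) :=
  marginal_posterior_closed_form_general N M J y b σ τ hσ α β p hp γ hγ1 hγ2 Ω hΩ1 hΩ2 hΩ3 hΩ4 hPD
end
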